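/- Let D ⊆ ℝ² be a bounded convex open set, let θ ∈ (0, 1], and let ρ : ℝ² → ℝ be a measurable weight with 0 ≤ ρ ≤ 1 on D and ∫_D ρ dx ≥ θ·|D|, where |D| is the Lebesgue measure of D. Then for every continuously differentiable function w : ℝ² → ℝ, ∫_D |w − e_ρ(w)| dx ≤ (2/θ)·diam(D)·∫_D |∇w| dx, where e_ρ(w) = (∫_D w·ρ dx)/(∫_D ρ dx). -/

import Mathlib

/-!
Since `(w x - e_ρ(w)) ∫_D ρ = ∫_D (w x - w y) ρ y dy` and `|ρ| ≤ 1`, the claim reduces to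
`∫_D ∫_D |w x - w y| ≤ 2 diam(D) |D| ∫_D |∇w|`. Write `w x - w y` as the integral of `∇w` along
the segment `(1 - t) y + t x` and exchange the order of integration. For fixed `t`, integrate
first in whichever of `x`, `y` carries the weight `s = max t (1 - t) ≥ 1/2`: by convexity the
homothety of ratio `s` centred at the other point maps `D` into itself, so the inner integral is
at most `s⁻²` times `∫_D |∇w|`, and `∫₀¹ max(t, 1 - t)⁻² dt = 2`.
-/

open MeasureTheory Set Module
open scoped ENNReal

noncomputable def weightedMean {α : Type*} [MeasurableSpace α] (ν : Measure α) (ρ w : α → ℝ) : ℝ :=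
  (∫ y, w y * ρ y ∂ν) / ∫ y, ρ y ∂ν

theorem enorm_sub_weightedMean_mul_le {α : Type*} [MeasurableSpace α] {ν : Measure α}
    {ρ w : α → ℝ} (hρ : ∫ y, ρ y ∂ν ≠ 0) (hwρ : Integrable (fun y => w y * ρ y) ν)
    (hρ1 : ∀ᵐ y ∂ν, ‖ρ y‖ ≤ 1) (c : ℝ) :
    ‖c - weightedMean ν ρ w‖ₑ * ‖∫ y, ρ y ∂ν‖ₑ ≤ ∫⁻ y, ‖c - w y‖ₑ ∂ν := by
  have hmul : (c - weightedMean ν ρ w) * ∫ y, ρ y ∂ν = ∫ y, (c - w y) * ρ y ∂ν := by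
    simp_rw [sub_mul]
    rw [integral_sub ((Integrable.of_integral_ne_zero hρ).const_mul c) hwρ, integral_const_mul,
      weightedMean]
    field_simp
  rw [← enorm_mul, hmul]
  refine (enorm_integral_le_lintegral_enorm _).trans (lintegral_mono_ae ?_)
  filter_upwards [hρ1] with y hy
  rw [enorm_mul]
  exact mul_le_of_le_one_right' (by simpa [← ofReal_norm] using hy)

theorem enorm_sub_le_lintegral_fderiv_segment {E F : Type*} [NormedAddCommGroup E]
    [NormedSpace ℝ E] [NormedAddCommGroup F] [NormedSpace ℝ F] [CompleteSpace F] {w : E → F}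
    (hw : ContDiff ℝ 1 w) (x y : E) :
    ‖w x - w y‖ₑ ≤ ‖x - y‖ₑ * ∫⁻ t in Ioc (0 : ℝ) 1, ‖fderiv ℝ w ((1 - t) • y + t • x)‖ₑ := by
  have hseg : ∀ t : ℝ, HasDerivAt (fun t : ℝ => (1 - t) • y + t • x) (x - y) t := by
    rw [show (fun t : ℝ => (1 - t) • y + t • x) = AffineMap.lineMap y x from
      funext fun t => (AffineMap.lineMap_apply_module y x t).symm]
    exact fun t => AffineMap.hasDerivAt_lineMap
  have hderiv : ∀ t : ℝ, HasDerivAt (fun t : ℝ => w ((1 - t) • y + t • x))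
      (fderiv ℝ w ((1 - t) • y + t • x) (x - y)) t := fun t =>
    ((hw.differentiable one_ne_zero _).hasFDerivAt).comp_hasDerivAt t (hseg t)
  have hcont : Continuous fun t : ℝ => fderiv ℝ w ((1 - t) • y + t • x) :=
    (hw.continuous_fderiv one_ne_zero).comp (by fun_prop)
  have hftc : w x - w y = ∫ t in Ioc (0 : ℝ) 1, fderiv ℝ w ((1 - t) • y + t • x) (x - y) := by
    rw [← intervalIntegral.integral_of_le zero_le_one,
      intervalIntegral.integral_eq_sub_of_hasDerivAt (fun t _ => hderiv t)
        ((hcont.clm_apply continuous_const).intervalIntegrable _ _)]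
    simp
  calc ‖w x - w y‖ₑ
      ≤ ∫⁻ t in Ioc (0 : ℝ) 1, ‖fderiv ℝ w ((1 - t) • y + t • x) (x - y)‖ₑ := by
        rw [hftc]; exact enorm_integral_le_lintegral_enorm _
    _ ≤ ∫⁻ t in Ioc (0 : ℝ) 1, ‖fderiv ℝ w ((1 - t) • y + t • x)‖ₑ * ‖x - y‖ₑ :=
        lintegral_mono fun t => ContinuousLinearMap.le_opENorm _ _
    _ = _ := by rw [lintegral_mul_const' _ _ enorm_ne_top, mul_comm]

section

variable {E : Type*} [NormedAddCommGroup E] [NormedSpace ℝ E] [FiniteDimensional ℝ E]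
  [MeasurableSpace E] [BorelSpace E] (μ : Measure E) [μ.IsAddHaarMeasure]

theorem lintegral_comp_homothety (G : E → ℝ≥0∞) (z : E) {s : ℝ} (hs : s ≠ 0) :
    ∫⁻ x, G ((1 - s) • z + s • x) ∂μ = ENNReal.ofReal |(s ^ finrank ℝ E)⁻¹| * ∫⁻ x, G x ∂μ := by
  rw [← lintegral_add_left_eq_self (μ := μ) G ((1 - s) • z), ← smul_eq_mul,
    ← lintegral_smul_measure, ← Measure.map_addHaar_smul μ hs]
  exact (lintegral_map_equiv (fun y => G ((1 - s) • z + y)) (MeasurableEquiv.smul₀ s hs)).symm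

theorem setLIntegral_comp_homothety_le {D : Set E} (hDm : MeasurableSet D) (hDc : Convex ℝ D)
    (G : E → ℝ≥0∞) {z : E} (hz : z ∈ D) {s : ℝ} (hs : s ∈ Ioc (0 : ℝ) 1) :
    ∫⁻ x in D, G ((1 - s) • z + s • x) ∂μ
      ≤ ENNReal.ofReal (s ^ finrank ℝ E)⁻¹ * ∫⁻ x in D, G x ∂μ := by
  have hmaps : ∀ x ∈ D, (1 - s) • z + s • x ∈ D := fun x hx =>
    hDc hz hx (by linarith [hs.2]) hs.1.le (by ring)
  calc ∫⁻ x in D, G ((1 - s) • z + s • x) ∂μ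
      ≤ ∫⁻ x, D.indicator G ((1 - s) • z + s • x) ∂μ := by
        rw [← lintegral_indicator hDm]
        refine lintegral_mono fun x => ?_
        by_cases hx : x ∈ D
        · simp [hx, hmaps x hx]
        · simp [hx]
    _ = ENNReal.ofReal (s ^ finrank ℝ E)⁻¹ * ∫⁻ x in D, G x ∂μ := by
        rw [lintegral_comp_homothety μ _ z hs.1.ne', lintegral_indicator hDm,
          abs_of_pos (by have := hs.1; positivity)]

theorem lintegral_lintegral_comp_homothety_le {D : Set E} (hDm : MeasurableSet D)
    (hDc : Convex ℝ D) (G : E → ℝ≥0∞) {s : ℝ} (hs : s ∈ Ioc (0 : ℝ) 1) :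
    ∫⁻ z in D, ∫⁻ x in D, G ((1 - s) • z + s • x) ∂μ ∂μ
      ≤ ENNReal.ofReal (s ^ finrank ℝ E)⁻¹ * μ D * ∫⁻ x in D, G x ∂μ := by
  calc ∫⁻ z in D, ∫⁻ x in D, G ((1 - s) • z + s • x) ∂μ ∂μ
      ≤ ∫⁻ _ in D, ENNReal.ofReal (s ^ finrank ℝ E)⁻¹ * ∫⁻ x in D, G x ∂μ ∂μ :=
        setLIntegral_mono' hDm fun z hz => setLIntegral_comp_homothety_le μ hDm hDc G hz hs
    _ = _ := by rw [setLIntegral_const]; ring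

theorem lintegral_lintegral_comp_segment_le {D : Set E} (hDm : MeasurableSet D)
    (hDc : Convex ℝ D) {G : E → ℝ≥0∞} (hG : Measurable G) {t : ℝ} (ht : t ∈ Icc (0 : ℝ) 1) :
    ∫⁻ x in D, ∫⁻ y in D, G ((1 - t) • y + t • x) ∂μ ∂μ
      ≤ ENNReal.ofReal (max t (1 - t) ^ finrank ℝ E)⁻¹ * μ D * ∫⁻ z in D, G z ∂μ := by
  rcases le_total t (1 - t) with h | h
  · rw [max_eq_right h]
    refine le_of_eq_of_le (lintegral_congr fun x => lintegral_congr fun y => ?_)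
      (lintegral_lintegral_comp_homothety_le μ hDm hDc G ⟨by linarith, by linarith [ht.1]⟩)
    congr 1
    module
  · rw [max_eq_left h, lintegral_lintegral_swap (by fun_prop)]
    exact lintegral_lintegral_comp_homothety_le μ hDm hDc G ⟨by linarith, ht.2⟩

theorem lintegral_lintegral_lintegral_comp_segment_le {D : Set E} (hDm : MeasurableSet D)
    (hDc : Convex ℝ D) {G : E → ℝ≥0∞} (hG : Measurable G) :
    ∫⁻ x in D, ∫⁻ y in D, (∫⁻ t in Ioc (0 : ℝ) 1, G ((1 - t) • y + t • x)) ∂μ ∂μ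
      ≤ (∫⁻ t in Ioc (0 : ℝ) 1, ENNReal.ofReal (max t (1 - t) ^ finrank ℝ E)⁻¹)
        * μ D * ∫⁻ z in D, G z ∂μ := by
  calc ∫⁻ x in D, ∫⁻ y in D, (∫⁻ t in Ioc (0 : ℝ) 1, G ((1 - t) • y + t • x)) ∂μ ∂μ
      = ∫⁻ x in D, ∫⁻ t in Ioc (0 : ℝ) 1, ∫⁻ y in D, G ((1 - t) • y + t • x) ∂μ ∂volume ∂μ :=
        lintegral_congr fun x => lintegral_lintegral_swap (by fun_prop)
    _ = ∫⁻ t in Ioc (0 : ℝ) 1, ∫⁻ x in D, ∫⁻ y in D, G ((1 - t) • y + t • x) ∂μ ∂μ :=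
        lintegral_lintegral_swap (by fun_prop)
    _ ≤ ∫⁻ t in Ioc (0 : ℝ) 1,
          ENNReal.ofReal (max t (1 - t) ^ finrank ℝ E)⁻¹ * μ D * ∫⁻ z in D, G z ∂μ :=
        setLIntegral_mono' measurableSet_Ioc fun t ht =>
          lintegral_lintegral_comp_segment_le μ hDm hDc hG (Ioc_subset_Icc_self ht)
    _ = _ := by rw [lintegral_mul_const _ (by fun_prop), lintegral_mul_const _ (by fun_prop)]

theorem lintegral_lintegral_enorm_sub_le {F : Type*} [NormedAddCommGroup F] [NormedSpace ℝ F]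
    [CompleteSpace F] {D : Set E} (hDm : MeasurableSet D) (hDc : Convex ℝ D) {w : E → F}
    (hw : ContDiff ℝ 1 w) :
    ∫⁻ x in D, ∫⁻ y in D, ‖w x - w y‖ₑ ∂μ ∂μ
      ≤ Metric.ediam D * (∫⁻ t in Ioc (0 : ℝ) 1, ENNReal.ofReal (max t (1 - t) ^ finrank ℝ E)⁻¹)
        * μ D * ∫⁻ z in D, ‖fderiv ℝ w z‖ₑ ∂μ := by
  have hG : Measurable fun z => ‖fderiv ℝ w z‖ₑ :=
    (hw.continuous_fderiv one_ne_zero).enorm.measurable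
  calc ∫⁻ x in D, ∫⁻ y in D, ‖w x - w y‖ₑ ∂μ ∂μ
      ≤ ∫⁻ x in D, ∫⁻ y in D, Metric.ediam D *
          (∫⁻ t in Ioc (0 : ℝ) 1, ‖fderiv ℝ w ((1 - t) • y + t • x)‖ₑ) ∂μ ∂μ := by
        refine setLIntegral_mono' hDm fun x hx => setLIntegral_mono' hDm fun y hy => ?_
        refine (enorm_sub_le_lintegral_fderiv_segment hw x y).trans (mul_le_mul_left ?_ _)
        rw [← edist_eq_enorm_sub]
        exact Metric.edist_le_ediam_of_mem hx hy
    _ = Metric.ediam D * ∫⁻ x in D, ∫⁻ y in D,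
          (∫⁻ t in Ioc (0 : ℝ) 1, ‖fderiv ℝ w ((1 - t) • y + t • x)‖ₑ) ∂μ ∂μ := by
        rw [← lintegral_const_mul _ (by fun_prop)]
        exact lintegral_congr fun x => lintegral_const_mul _ (by fun_prop)
    _ ≤ Metric.ediam D * ((∫⁻ t in Ioc (0 : ℝ) 1, ENNReal.ofReal (max t (1 - t) ^ finrank ℝ E)⁻¹)
          * μ D * ∫⁻ z in D, ‖fderiv ℝ w z‖ₑ ∂μ) := by
        gcongr
        exact lintegral_lintegral_lintegral_comp_segment_le μ hDm hDc hG
    _ = _ := by ring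

theorem lintegral_enorm_sub_weightedMean_mul_le {D : Set E} (hDm : MeasurableSet D)
    (hDc : Convex ℝ D) {ρ w : E → ℝ} (hρ : ∫ y in D, ρ y ∂μ ≠ 0)
    (hwρ : IntegrableOn (fun y => w y * ρ y) D μ) (hρ1 : ∀ᵐ y ∂μ.restrict D, ‖ρ y‖ ≤ 1)
    (hw : ContDiff ℝ 1 w) :
    (∫⁻ x in D, ‖w x - weightedMean (μ.restrict D) ρ w‖ₑ ∂μ) * ‖∫ y in D, ρ y ∂μ‖ₑ
      ≤ Metric.ediam D * (∫⁻ t in Ioc (0 : ℝ) 1, ENNReal.ofReal (max t (1 - t) ^ finrank ℝ E)⁻¹)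
        * μ D * ∫⁻ z in D, ‖fderiv ℝ w z‖ₑ ∂μ := by
  rw [← lintegral_mul_const' _ _ enorm_ne_top]
  exact (lintegral_mono fun x => enorm_sub_weightedMean_mul_le hρ hwρ hρ1 (w x)).trans
    (lintegral_lintegral_enorm_sub_le μ hDm hDc hw)

end

theorem continuous_inv_sq_max_one_sub : Continuous fun t : ℝ => (max t (1 - t) ^ 2)⁻¹ :=
  (by fun_prop : Continuous fun t : ℝ => max t (1 - t) ^ 2).inv₀ fun t => by
    have : (1 : ℝ) / 2 ≤ max t (1 - t) := by
      rcases le_total t (1 - t) with h | h <;> simp [h] <;> linarith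
    positivity

theorem integral_inv_sq_max_one_sub : ∫ t in (0 : ℝ)..1, (max t (1 - t) ^ 2)⁻¹ = 2 := by
  have hcont := continuous_inv_sq_max_one_sub
  have hsymm : ∫ t in (0 : ℝ)..1 / 2, (max t (1 - t) ^ 2)⁻¹
      = ∫ t in (1 / 2 : ℝ)..1, (max t (1 - t) ^ 2)⁻¹ := by
    have := intervalIntegral.integral_comp_sub_left (fun t : ℝ => (max t (1 - t) ^ 2)⁻¹) 1
      (a := 1 / 2) (b := 1)
    norm_num [max_comm] at this
    exact this.symm
  have hright : ∫ t in (1 / 2 : ℝ)..1, (max t (1 - t) ^ 2)⁻¹ = 1 := by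
    rw [intervalIntegral.integral_congr (g := fun t : ℝ => t ^ (-2 : ℤ)) fun t ht => ?_,
      integral_zpow (.inr ⟨by norm_num, by rw [uIcc_of_le (by norm_num)]; norm_num⟩)]
    · norm_num
    · rw [uIcc_of_le (by norm_num)] at ht
      simp [max_eq_left (show 1 - t ≤ t by linarith [ht.1])]
  rw [← intervalIntegral.integral_add_adjacent_intervals (b := 1 / 2)
    (hcont.intervalIntegrable _ _) (hcont.intervalIntegrable _ _), hsymm, hright]
  norm_num

theorem lintegral_inv_sq_max_one_sub :
    ∫⁻ t in Ioc (0 : ℝ) 1, ENNReal.ofReal (max t (1 - t) ^ 2)⁻¹ = 2 := by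
  rw [← ofReal_integral_eq_lintegral_ofReal continuous_inv_sq_max_one_sub.integrableOn_Ioc
    (ae_of_all _ fun t => by positivity), ← intervalIntegral.integral_of_le zero_le_one,
    integral_inv_sq_max_one_sub, ENNReal.ofReal_ofNat]

theorem integral_abs_sub_weightedMean_mul_le {D : Set (EuclideanSpace ℝ (Fin 2))}
    (hDb : Bornology.IsBounded D) (hDm : MeasurableSet D) (hDc : Convex ℝ D)
    {ρ w : EuclideanSpace ℝ (Fin 2) → ℝ} (hρ : ∫ y in D, ρ y ≠ 0)
    (hρ1 : ∀ᵐ y ∂volume.restrict D, ‖ρ y‖ ≤ 1) (hw : ContDiff ℝ 1 w) :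
    (∫ x in D, |w x - weightedMean (volume.restrict D) ρ w|) * |∫ y in D, ρ y|
      ≤ Metric.diam D * 2 * (volume D).toReal * ∫ x in D, ‖fderiv ℝ w x‖ := by
  have hK := hDb.isCompact_closure
  have hwρ : IntegrableOn (fun y => w y * ρ y) D :=
    ((hw.continuous.continuousOn.integrableOn_compact hK).mono_set subset_closure).mul_bdd
      (Integrable.of_integral_ne_zero hρ).aestronglyMeasurable hρ1
  have hgrad : ∫⁻ z in D, ‖fderiv ℝ w z‖ₑ < ⊤ :=
    (((hw.continuous_fderiv one_ne_zero).continuousOn.integrableOn_compact hK).mono_set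
      subset_closure).2
  have key := lintegral_enorm_sub_weightedMean_mul_le volume hDm hDc hρ hwρ hρ1 hw
  rw [finrank_euclideanSpace_fin, lintegral_inv_sq_max_one_sub] at key
  have hreal := ENNReal.toReal_mono
    (by finiteness [hDb.ediam_ne_top, (hDb.measure_lt_top (μ := volume)).ne]) key
  simp only [ENNReal.toReal_mul, toReal_enorm, ENNReal.toReal_ofNat] at hreal
  rwa [← integral_norm_eq_lintegral_enorm (hw.continuous_fderiv one_ne_zero).aestronglyMeasurable,
    ← integral_norm_eq_lintegral_enorm (f := fun x => w x - weightedMean (volume.restrict D) ρ w)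
      (hw.continuous.sub continuous_const).aestronglyMeasurable] at hreal

theorem weighted_poincare_L1_general
    (D : Set (EuclideanSpace ℝ (Fin 2)))
    (hDo : IsOpen D) (hDb : Bornology.IsBounded D) (hDc : Convex ℝ D)
    (θ : ℝ) (hθ : θ ∈ Set.Ioc (0 : ℝ) 1)
    (ρ : EuclideanSpace ℝ (Fin 2) → ℝ)
    (hρ0 : ∀ x ∈ D, 0 ≤ ρ x) (hρ1 : ∀ x ∈ D, ρ x ≤ 1)
    (hρθ : θ * (volume D).toReal ≤ ∫ x in D, ρ x) :
    ∀ w : EuclideanSpace ℝ (Fin 2) → ℝ, ContDiff ℝ 1 w →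
      (∫ x in D, |w x - (∫ y in D, w y * ρ y) / ∫ y in D, ρ y|) ≤
        (2 / θ) * Metric.diam D * ∫ x in D, ‖fderiv ℝ w x‖ := by
  intro w hw
  rcases eq_or_ne (volume D) 0 with hD0 | hD0
  · simp [Measure.restrict_eq_zero.mpr hD0]
  have hV : 0 < (volume D).toReal := ENNReal.toReal_pos hD0 hDb.measure_lt_top.ne
  have hI : 0 < ∫ y in D, ρ y := (mul_pos hθ.1 hV).trans_le hρθ
  have hρle : ∀ᵐ y ∂volume.restrict D, ‖ρ y‖ ≤ 1 := ae_restrict_of_forall_mem hDo.measurableSet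
    fun y hy => abs_le.2 ⟨by linarith [hρ0 y hy], hρ1 y hy⟩
  have hmain := integral_abs_sub_weightedMean_mul_le hDb hDo.measurableSet hDc hI.ne' hρle hw
  rw [abs_of_pos hI] at hmain
  change (∫ x in D, |w x - weightedMean (volume.restrict D) ρ w|) ≤ _
  rw [div_mul_eq_mul_div, div_mul_eq_mul_div, le_div_iff₀ hθ.1]
  refine le_of_mul_le_mul_right ?_ hV
  calc _ ≤ (∫ x in D, |w x - weightedMean (volume.restrict D) ρ w|) * ∫ y in D, ρ y := by
        rw [mul_assoc]; exact mul_le_mul_of_nonneg_left hρθ (by positivity)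
    _ ≤ _ := hmain.trans_eq (by ring)

/-- Weighted `L¹` Poincaré-type inequality on a bounded convex open set `D ⊆ ℝ²`:
if `0 ≤ ρ ≤ 1` on `D` and `∫_D ρ ≥ θ·|D|`, then for every `C¹` function `w`,
`∫_D |w - e_ρ(w)| ≤ (2/θ)·diam(D)·∫_D |∇w|`, where
`e_ρ(w) = (∫_D w·ρ)/(∫_D ρ)`. -/
theorem weighted_poincare_L1
    (D : Set (EuclideanSpace ℝ (Fin 2)))
    (hDo : IsOpen D) (hDb : Bornology.IsBounded D) (hDc : Convex ℝ D)
    (θ : ℝ) (hθ : θ ∈ Set.Ioc (0 : ℝ) 1)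
    (ρ : EuclideanSpace ℝ (Fin 2) → ℝ) (hρm : Measurable ρ)
    (hρ0 : ∀ x ∈ D, 0 ≤ ρ x) (hρ1 : ∀ x ∈ D, ρ x ≤ 1)
    (hρθ : θ * (volume D).toReal ≤ ∫ x in D, ρ x) :
    ∀ w : EuclideanSpace ℝ (Fin 2) → ℝ, ContDiff ℝ 1 w →
      (∫ x in D, |w x - (∫ y in D, w y * ρ y) / ∫ y in D, ρ y|) ≤
        (2 / θ) * Metric.diam D * ∫ x in D, ‖fderiv ℝ w x‖ :=
  weighted_poincare_L1_general D hDo hDb hDc θ hθ ρ hρ0 hρ1 hρθ
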